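/- Let π be a sum-indecomposable pattern of length j ≥ 3 and let w_k denote the number of π-avoiding weak ascent sequences of length k. Then w_{m+n} ≥ w_m · w_n for all m, n ≥ 1. -/

import Mathlib

open Filter Topology

/-- Number of ascents in a sequence (list) of naturals. -/
def asc (s : List ℕ) : ℕ :=
  ((s.zip s.tail).filter (fun p => p.1 < p.2)).length

/-- `s` is an ascent sequence: first entry `0`, and each later entry is at most
one more than the number of ascents of the preceding prefix. -/
def IsAscentSeq (s : List ℕ) : Prop :=
  (0 < s.length → s.getD 0 0 = 0) ∧
  ∀ i, 0 < i → i < s.length → s.getD i 0 ≤ asc (s.take i) + 1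

/-- `s` is a weak ascent sequence: every entry is at most the number of ascents. -/
def IsWeakAscentSeq (s : List ℕ) : Prop :=
  ∀ x ∈ s, x ≤ asc s

/-- `s` contains the pattern `p`: some subsequence of `s` is order-isomorphic
(including equalities) to `p`. -/
def ContainsPattern (s p : List ℕ) : Prop :=
  ∃ idx : Fin p.length → ℕ, StrictMono idx ∧ (∀ a, idx a < s.length) ∧
    ∀ a b : Fin p.length, p.get a < p.get b ↔ s.getD (idx a) 0 < s.getD (idx b) 0

def AvoidsPattern (s p : List ℕ) : Prop := ¬ ContainsPattern s p

/-- A pattern of length `j` is a permutation of `0,…,j-1`. -/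
def IsPattern (p : List ℕ) : Prop := List.Perm p (List.range p.length)

/-- Sum-indecomposable: no proper prefix whose entries are all smaller than
all entries of the complementary suffix. -/
def SumIndecomposable (p : List ℕ) : Prop :=
  ¬ ∃ i, 0 < i ∧ i < p.length ∧ ∀ x ∈ p.take i, ∀ y ∈ p.drop i, x < y

/-- Number of `p`-avoiding ascent sequences of length `k`. -/
noncomputable def ascentAvoidCount (p : List ℕ) (k : ℕ) : ℕ :=
  {s : List ℕ | s.length = k ∧ IsAscentSeq s ∧ AvoidsPattern s p}.ncard

/-- Number of `p`-avoiding weak ascent sequences of length `k`. -/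
noncomputable def weakAvoidCount (p : List ℕ) (k : ℕ) : ℕ :=
  {s : List ℕ | s.length = k ∧ IsWeakAscentSeq s ∧ AvoidsPattern s p}.ncard

def listMax (s : List ℕ) : ℕ := s.foldr max 0
def listMin (s : List ℕ) : ℕ := s.foldr min (listMax s)

/-- Reverse-complement map: `m j = max + min - n (k+1-j)`. -/
def revComp (s : List ℕ) : List ℕ :=
  s.reverse.map (fun x => listMax s + listMin s - x)

/-- Occurrence of pattern 000: three equal entries. -/
def Contains000 (s : List ℕ) : Prop :=
  ∃ a b c, a < b ∧ b < c ∧ c < s.length ∧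
    s.getD a 0 = s.getD b 0 ∧ s.getD b 0 = s.getD c 0

/-- Occurrence of pattern 100: `n i₁ > n i₂ = n i₃`. -/
def Contains100 (s : List ℕ) : Prop :=
  ∃ a b c, a < b ∧ b < c ∧ c < s.length ∧
    s.getD b 0 < s.getD a 0 ∧ s.getD b 0 = s.getD c 0

/-- Occurrence of pattern 110: `n i₁ = n i₂ > n i₃`. -/
def Contains110 (s : List ℕ) : Prop :=
  ∃ a b c, a < b ∧ b < c ∧ c < s.length ∧
    s.getD a 0 = s.getD b 0 ∧ s.getD c 0 < s.getD b 0

/-- Occurrence of pattern 120: `n i₂ > n i₁ > n i₃`. -/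
def Contains120 (s : List ℕ) : Prop :=
  ∃ a b c, a < b ∧ b < c ∧ c < s.length ∧
    s.getD a 0 < s.getD b 0 ∧ s.getD c 0 < s.getD a 0

/-- Occurrence of pattern 201: `n i₁ > n i₃ > n i₂`. -/
def Contains201 (s : List ℕ) : Prop :=
  ∃ a b c, a < b ∧ b < c ∧ c < s.length ∧
    s.getD c 0 < s.getD a 0 ∧ s.getD b 0 < s.getD c 0

/-- Occurrence of pattern 012: `n i₁ < n i₂ < n i₃`. -/
def Contains012 (s : List ℕ) : Prop :=
  ∃ a b c, a < b ∧ b < c ∧ c < s.length ∧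
    s.getD a 0 < s.getD b 0 ∧ s.getD b 0 < s.getD c 0

/-- Occurrence of pattern 011: `n i₁ < n i₂ = n i₃`. -/
def Contains011 (s : List ℕ) : Prop :=
  ∃ a b c, a < b ∧ b < c ∧ c < s.length ∧
    s.getD a 0 < s.getD b 0 ∧ s.getD b 0 = s.getD c 0

/-- Occurrence of pattern 021: `n i₁ < n i₃ < n i₂`. -/
def Contains021 (s : List ℕ) : Prop :=
  ∃ a b c, a < b ∧ b < c ∧ c < s.length ∧
    s.getD a 0 < s.getD c 0 ∧ s.getD c 0 < s.getD b 0

/-- Occurrence of pattern 102: `n i₂ < n i₁ < n i₃`. -/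
def Contains102 (s : List ℕ) : Prop :=
  ∃ a b c, a < b ∧ b < c ∧ c < s.length ∧
    s.getD b 0 < s.getD a 0 ∧ s.getD a 0 < s.getD c 0

/-- The construction `C = 0101⋯01 W̃₁⋯W̃ₖ` from weak ascent sequences. -/
def buildC (k : ℕ) (W : Fin k → List ℕ) : List ℕ :=
  (List.replicate k ([0,1] : List ℕ)).flatten ++
    (List.ofFn (fun h : Fin k =>
      (W h).map (fun x =>
        x + 1 + ∑ j ∈ Finset.univ.filter (fun j => j < h), listMax (W j)))).flatten

/-! If `A` and `B` avoid `π`, then so does `A ⊕ B`, the concatenation of `A` with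
`B` shifted above `max A`. Every entry of the shifted copy exceeds every entry of `A`, so an
occurrence of `π` meeting both parts would split `π` as a sum; one inside a single part is
an occurrence in `A` or in `B`. The junction `last A < head (shifted B)` is an extra ascent,
so `asc (A ⊕ B) ≥ asc A + asc B + 1 ≥ max A + 1 + max B`, and `A ⊕ B` is again weak. Since
`(A, B) ↦ A ⊕ B` is injective on pairs with `|A| = m`, this gives `w_m w_n ≤ w_{m+n}`. -/

lemma asc_cons_cons (a b : ℕ) (t : List ℕ) :
    asc (a :: b :: t) = (if a < b then 1 else 0) + asc (b :: t) := by
  unfold asc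
  by_cases h : a < b <;> simp [h, Nat.add_comm]

lemma asc_le_length (s : List ℕ) : asc s ≤ s.length :=
  (List.length_filter_le _ _).trans (by simp)

lemma asc_map_of_strictMono {f : ℕ → ℕ} (hf : StrictMono f) :
    ∀ l : List ℕ, asc (l.map f) = asc l
  | [] | [_] => rfl
  | a :: b :: t => by
    rw [List.map_cons, List.map_cons, asc_cons_cons, ← List.map_cons,
      asc_map_of_strictMono hf (b :: t), asc_cons_cons]
    simp only [hf.lt_iff_lt]

lemma asc_append_of_getLast_lt_head :
    ∀ {A B : List ℕ} (hA : A ≠ []) (hB : B ≠ []), A.getLast hA < B.head hB →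
      asc A + asc B + 1 ≤ asc (A ++ B)
  | [a], b :: B, _, _, h => by
    simp only [List.getLast_singleton, List.head_cons] at h
    simp [asc_cons_cons, h, show asc [a] = 0 from rfl, Nat.add_comm]
  | a :: a' :: A, B, _, hB, h => by
    have ih := asc_append_of_getLast_lt_head (List.cons_ne_nil a' A) hB
      (by simpa using h)
    rw [List.cons_append, List.cons_append, asc_cons_cons, asc_cons_cons, ← List.cons_append]
    omega

lemma le_listMax {x : ℕ} {s : List ℕ} (hx : x ∈ s) : x ≤ listMax s := by
  induction s with
  | nil => simp at hx
  | cons a t ih =>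
    rcases List.mem_cons.mp hx with rfl | h
    · exact le_max_left _ _
    · exact (ih h).trans (le_max_right _ _)

lemma listMax_le {c : ℕ} {s : List ℕ} (hs : ∀ x ∈ s, x ≤ c) : listMax s ≤ c := by
  induction s with
  | nil => exact Nat.zero_le c
  | cons a t ih =>
    exact max_le (hs a List.mem_cons_self) (ih fun x hx => hs x (List.mem_cons_of_mem a hx))

section Patterns

variable {p : List ℕ}

lemma AvoidsPattern.map_of_strictMono {s : List ℕ} {f : ℕ → ℕ} (hf : StrictMono f)
    (hs : AvoidsPattern s p) : AvoidsPattern (s.map f) p := by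
  rintro ⟨idx, hmono, hlt, hiso⟩
  rw [List.length_map] at hlt
  have hget : ∀ a, (s.map f).getD (idx a) 0 = f (s.getD (idx a) 0) := fun a => by
    rw [List.getD_eq_getElem _ _ (by simpa using hlt a), List.getD_eq_getElem _ _ (hlt a),
      List.getElem_map]
  exact hs ⟨idx, hmono, hlt, fun a b => by rw [hiso, hget, hget, hf.lt_iff_lt]⟩

lemma Fin.exists_lt_iff_lt_of_monotone {k : ℕ} {f : Fin k → ℕ} (hf : Monotone f) (t : ℕ) :
    ∃ i, ∀ a : Fin k, (a : ℕ) < i ↔ f a < t := by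
  have hex : ∃ i : ℕ, ∀ a : Fin k, i ≤ a → t ≤ f a :=
    ⟨k, fun a ha => absurd a.isLt (by omega)⟩
  refine ⟨Nat.find hex, fun a => ⟨fun ha => ?_, fun ha => ?_⟩⟩
  · obtain ⟨b, hab, hb⟩ : ∃ b : Fin k, (a : ℕ) ≤ b ∧ f b < t := by
      simpa using Nat.find_min hex ha
    exact (hf (Fin.le_iff_val_le_val.mpr hab)).trans_lt hb
  · by_contra h
    exact absurd (Nat.find_spec hex a (not_lt.mp h)) (not_le.mpr ha)

lemma SumIndecomposable.exists_inversion_across (hsi : SumIndecomposable p) {i : ℕ}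
    (hi0 : 0 < i) (hi : i < p.length) :
    ∃ u v : Fin p.length, (u : ℕ) < i ∧ i ≤ v ∧ p.get v ≤ p.get u := by
  by_contra! h
  refine hsi ⟨i, hi0, hi, fun x hx y hy => ?_⟩
  obtain ⟨u, hu, rfl⟩ := List.getElem_of_mem hx
  obtain ⟨v, hv, rfl⟩ := List.getElem_of_mem hy
  simp only [List.length_take, List.length_drop] at hu hv
  simpa using h ⟨u, by omega⟩ ⟨i + v, by omega⟩ (by simp; omega) (by simp)

theorem AvoidsPattern.append (hsi : SumIndecomposable p) {A B : List ℕ}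
    (hA : AvoidsPattern A p) (hB : AvoidsPattern B p) (hAB : ∀ x ∈ A, ∀ y ∈ B, x < y) :
    AvoidsPattern (A ++ B) p := by
  rintro ⟨idx, hmono, hlt, hiso⟩
  simp only [List.length_append] at hlt
  obtain ⟨i, hi⟩ := Fin.exists_lt_iff_lt_of_monotone hmono.monotone A.length
  by_cases hi0 : i = 0
  · have hge : ∀ a, A.length ≤ idx a := fun a =>
      not_lt.mp fun h => by simpa [hi0] using (hi a).mpr h
    refine hB ⟨fun a => idx a - A.length, fun a b hab => ?_, fun a => ?_, fun a b => ?_⟩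
    · have := hmono hab; have := hge a; dsimp only; omega
    · have := hlt a; have := hge a; dsimp only; omega
    · rw [hiso, List.getD_append_right _ _ _ _ (hge a), List.getD_append_right _ _ _ _ (hge b)]
  by_cases hlen : p.length ≤ i
  · have hlt' : ∀ a, idx a < A.length := fun a => (hi a).mp (by omega)
    refine hA ⟨idx, hmono, hlt', fun a b => ?_⟩
    rw [hiso, List.getD_append _ _ _ _ (hlt' a), List.getD_append _ _ _ _ (hlt' b)]
  obtain ⟨u, v, hu, hv, huv⟩ := hsi.exists_inversion_across (Nat.pos_of_ne_zero hi0) (by omega)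
  have hAu : idx u < A.length := (hi u).mp hu
  have hBv : A.length ≤ idx v := not_lt.mp fun h => by have := (hi v).mpr h; omega
  refine (not_lt.mpr huv) ((hiso u v).mpr ?_)
  rw [List.getD_append _ _ _ _ hAu, List.getD_append_right _ _ _ _ hBv,
    List.getD_eq_getElem _ _ hAu, List.getD_eq_getElem _ _ (by have := hlt v; omega)]
  exact hAB _ (List.getElem_mem _) _ (List.getElem_mem _)

end Patterns

def directSum (A B : List ℕ) : List ℕ :=
  A ++ B.map (· + (listMax A + 1))

lemma directSum_inj {A A' B B' : List ℕ} (hlen : A.length = A'.length)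
    (h : directSum A B = directSum A' B') : A = A' ∧ B = B' := by
  obtain ⟨rfl, hB⟩ := List.append_inj h hlen
  exact ⟨rfl, List.map_injective_iff.mpr (add_left_injective _) hB⟩

lemma IsWeakAscentSeq.directSum {A B : List ℕ} (hA : IsWeakAscentSeq A) (hA0 : A ≠ [])
    (hB : IsWeakAscentSeq B) : IsWeakAscentSeq (directSum A B) := by
  have hmaxA : listMax A ≤ asc A := listMax_le hA
  have hshift : StrictMono (· + (listMax A + 1)) := fun _ _ h => Nat.add_lt_add_right h _
  have hjunction (hB0 : B ≠ []) : asc A + asc B + 1 ≤ asc (_root_.directSum A B) := by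
    have hlast := le_listMax (List.getLast_mem hA0)
    have := asc_append_of_getLast_lt_head (B := B.map (· + (listMax A + 1))) hA0
      (by simpa using hB0)
      (by rw [List.head_map]; omega)
    rwa [asc_map_of_strictMono hshift] at this
  intro x hx
  rcases List.mem_append.mp hx with hxA | hxB
  · rcases eq_or_ne B [] with rfl | hB0
    · simpa [_root_.directSum] using hA x hxA
    · exact (hA x hxA).trans (by have := hjunction hB0; omega)
  · obtain ⟨b, hb, rfl⟩ := List.mem_map.mp hxB
    have := hjunction (List.ne_nil_of_mem hb)
    have := hB b hb
    omega

lemma AvoidsPattern.directSum {p A B : List ℕ} (hsi : SumIndecomposable p)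
    (hA : AvoidsPattern A p) (hB : AvoidsPattern B p) :
    AvoidsPattern (directSum A B) p :=
  hA.append hsi (hB.map_of_strictMono fun _ _ h => Nat.add_lt_add_right h _) fun x hx y hy => by
    obtain ⟨b, -, rfl⟩ := List.mem_map.mp hy
    have := le_listMax hx
    omega

def weakAvoiders (p : List ℕ) (k : ℕ) : Set (List ℕ) :=
  {s | s.length = k ∧ IsWeakAscentSeq s ∧ AvoidsPattern s p}

lemma weakAvoiders_finite (p : List ℕ) (k : ℕ) : (weakAvoiders p k).Finite := by
  refine ((List.finite_length_eq (Fin (k + 1)) k).image (List.map Fin.val)).subset ?_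
  rintro s ⟨hlen, hw, -⟩
  have hbound : ∀ x ∈ s, x < k + 1 := fun x hx => by
    have := hw x hx; have := asc_le_length s; omega
  exact ⟨s.pmap Fin.mk hbound, by simp [hlen], by simp [List.map_pmap]⟩

lemma directSum_mem_weakAvoiders {p A B : List ℕ} {m n : ℕ} (hsi : SumIndecomposable p)
    (hm : 1 ≤ m) (hA : A ∈ weakAvoiders p m) (hB : B ∈ weakAvoiders p n) :
    directSum A B ∈ weakAvoiders p (m + n) := by
  obtain ⟨hAl, hAw, hAav⟩ := hA
  obtain ⟨hBl, hBw, hBav⟩ := hB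
  refine ⟨by simp [directSum, hAl, hBl], hAw.directSum ?_ hBw, hAav.directSum hsi hBav⟩
  rintro rfl
  simp at hAl
  omega

theorem stmt2_general (p : List ℕ)
    (hsi : SumIndecomposable p) (m n : ℕ) (hm : 1 ≤ m) :
    weakAvoidCount p m * weakAvoidCount p n ≤ weakAvoidCount p (m + n) := by
  let F : List ℕ × List ℕ → List ℕ := fun q => directSum q.1 q.2
  have hmaps :
      Set.MapsTo F (weakAvoiders p m ×ˢ weakAvoiders p n) (weakAvoiders p (m + n)) :=
    fun _ ⟨hA, hB⟩ => directSum_mem_weakAvoiders hsi hm hA hB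
  have hinj : Set.InjOn F (weakAvoiders p m ×ˢ weakAvoiders p n) :=
    fun _ ⟨hA, _⟩ _ ⟨hA', _⟩ h => Prod.ext_iff.mpr (directSum_inj (hA.1.trans hA'.1.symm) h)
  calc weakAvoidCount p m * weakAvoidCount p n
      = (weakAvoiders p m ×ˢ weakAvoiders p n).ncard := Set.ncard_prod.symm
    _ = (F '' (weakAvoiders p m ×ˢ weakAvoiders p n)).ncard := hinj.ncard_image.symm
    _ ≤ weakAvoidCount p (m + n) :=
        Set.ncard_le_ncard hmaps.image_subset (weakAvoiders_finite p (m + n))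

/-- Supermultiplicativity of the counts of π-avoiding weak ascent sequences. -/
theorem stmt2 (p : List ℕ) (hp : IsPattern p) (hp3 : 3 ≤ p.length)
    (hsi : SumIndecomposable p) (m n : ℕ) (hm : 1 ≤ m) (hn : 1 ≤ n) :
    weakAvoidCount p m * weakAvoidCount p n ≤ weakAvoidCount p (m + n) :=
  stmt2_general p hsi m n hm
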